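/- For any simple graph G and natural numbers m, n ≥ 1, if M is a maximum matching of the n-subdivision G^{1/n} and l is the number of vertices of G^{1/n} not covered by M, then α'(G^{1/n}) ≤ α'(G^{m/n}) ≤ α'(G^{1/n}) + floor(l/2). -/

import Mathlib

open SimpleGraph

/-- The matching number: maximum size of a matching. -/
noncomputable def matchingNumber {V : Type*} (G : SimpleGraph V) : ℕ :=
  sSup {n | ∃ M : G.Subgraph, M.IsMatching ∧ M.edgeSet.ncard = n}

/-- The `m`-th distance power of a graph. -/
def graphPow {V : Type*} (G : SimpleGraph V) (m : ℕ) : SimpleGraph V where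
  Adj x y := x ≠ y ∧ G.dist x y ≤ m
  symm := ⟨fun x y ⟨h1, h2⟩ => ⟨h1.symm, by rwa [SimpleGraph.dist_comm]⟩⟩
  loopless := ⟨fun x h => h.1 rfl⟩

/-- The `n`-subdivision of a graph: each edge `xy` (with `x < y`) is replaced by a
path `x, (xy)_1, …, (xy)_{n-1}, y` of length `n`. -/
def subdivision {V : Type*} [LinearOrder V] (G : SimpleGraph V) (n : ℕ) :
    SimpleGraph (V ⊕ ({e : V × V // e.1 < e.2 ∧ G.Adj e.1 e.2} × Fin (n - 1))) where
  Adj u v :=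
    match u, v with
    | .inl x, .inl y => n = 1 ∧ G.Adj x y
    | .inl x, .inr (e, i) => (i.val = 0 ∧ e.val.1 = x) ∨ (i.val = n - 2 ∧ e.val.2 = x)
    | .inr (e, i), .inl x => (i.val = 0 ∧ e.val.1 = x) ∨ (i.val = n - 2 ∧ e.val.2 = x)
    | .inr (e, i), .inr (f, j) => e = f ∧ (i.val + 1 = j.val ∨ j.val + 1 = i.val)
  symm := by
    constructor
    rintro (x | ⟨e, i⟩) (y | ⟨f, j⟩) h
    · exact ⟨h.1, h.2.symm⟩
    · exact h
    · exact h
    · exact ⟨h.1.symm, h.2.symm⟩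
  loopless := by
    constructor
    rintro (x | ⟨e, i⟩) h
    · exact G.loopless.irrefl x h.2
    · rcases h with ⟨-, h | h⟩ <;> omega

/-- A matching is maximal if it cannot be extended to a larger matching. -/
def IsMaximalMatching {V : Type*} {G : SimpleGraph V} (M : G.Subgraph) : Prop :=
  M.IsMatching ∧
    ∀ M' : G.Subgraph, M'.IsMatching → M.edgeSet ⊆ M'.edgeSet → M.edgeSet = M'.edgeSet

/-- The saturation number: minimum size of a maximal matching. -/
noncomputable def satNumber {V : Type*} (G : SimpleGraph V) : ℕ :=
  sInf {n | ∃ M : G.Subgraph, IsMaximalMatching M ∧ M.edgeSet.ncard = n}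

/-- The friendship graph `F_k`: `k` triangles sharing the common vertex `0`;
the `i`-th triangle has vertices `0, 2i+1, 2i+2`. -/
def friendshipGraph (k : ℕ) : SimpleGraph (Fin (2 * k + 1)) :=
  SimpleGraph.fromRel (fun x y => x.val = 0 ∨ (x.val + 1 = y.val ∧ y.val % 2 = 0))

/-- The chain triangular cactus `T_k`: `k` triangles in a chain, the `i`-th triangle
having vertices `2i, 2i+1, 2i+2` and sharing cut-vertices with its neighbours. -/
def chainTriangularCactus (k : ℕ) : SimpleGraph (Fin (2 * k + 1)) :=
  SimpleGraph.fromRel (fun x y => y.val = x.val + 1 ∨ (y.val = x.val + 2 ∧ x.val % 2 = 0))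

/-- The complete bipartite graph `K_{m,n}` on `Fin (m+n)`, with parts
`{0,…,m-1}` and `{m,…,m+n-1}`. -/
def completeBipartite (m n : ℕ) : SimpleGraph (Fin (m + n)) :=
  SimpleGraph.fromRel (fun x y => x.val < m ∧ m ≤ y.val)

/-! Since `m ≥ 1`, the subdivision is a spanning subgraph of its `m`-th power, so its matchings
are matchings of the power. Conversely a matching of any graph on the vertex set `X` of the
subdivision covers at most `|X| = 2 α'(G^{1/n}) + l` vertices, hence has at most
`α'(G^{1/n}) + ⌊l/2⌋` edges. -/

namespace SimpleGraph

variable {V : Type*} {H : SimpleGraph V}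

lemma le_graphPow {m : ℕ} (hm : 1 ≤ m) : H ≤ graphPow H m := fun _ _ h =>
  ⟨h.ne, (dist_eq_one_iff_adj.mpr h).trans_le hm⟩

lemma Subgraph.IsMatching.ncard_verts [Finite V] {M : H.Subgraph} (hM : M.IsMatching) :
    M.verts.ncard = 2 * M.edgeSet.ncard := by
  have hfiber (e : M.edgeSet) : Nat.card {x // hM.toEdge x = e} = 2 := by
    obtain ⟨⟨u, v⟩, huv⟩ := e
    change Nat.card (hM.toEdge ⁻¹' {⟨s(u, v), huv⟩}) = 2
    rw [hM.toEdge_preimage_singleton huv, Nat.card_coe_set_eq, Set.ncard_pair]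
    simpa using (M.adj_sub huv).ne
  have := Fintype.ofFinite M.edgeSet
  rw [← Nat.card_coe_set_eq, ← Nat.card_coe_set_eq,
    ← Nat.card_congr (Equiv.sigmaFiberEquiv hM.toEdge), Nat.card_sigma]
  simp only [hfiber, Finset.sum_const, Finset.card_univ, smul_eq_mul, Nat.card_eq_fintype_card,
    mul_comm]

lemma Subgraph.IsMatching.two_mul_ncard_edgeSet_le [Finite V] {M : H.Subgraph}
    (hM : M.IsMatching) : 2 * M.edgeSet.ncard ≤ Nat.card V :=
  hM.ncard_verts ▸ Set.ncard_le_card M.verts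

lemma bddAbove_ncard_edgeSet_isMatching [Finite V] (H : SimpleGraph V) :
    BddAbove {k | ∃ M : H.Subgraph, M.IsMatching ∧ M.edgeSet.ncard = k} := by
  refine ⟨Nat.card V, ?_⟩
  rintro _ ⟨M, hM, rfl⟩
  have hle := hM.two_mul_ncard_edgeSet_le
  omega

lemma Subgraph.IsMatching.ncard_edgeSet_le_matchingNumber [Finite V] {M : H.Subgraph}
    (hM : M.IsMatching) : M.edgeSet.ncard ≤ matchingNumber H :=
  le_csSup (bddAbove_ncard_edgeSet_isMatching H) ⟨M, hM, rfl⟩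

lemma exists_isMatching_ncard_edgeSet_eq_matchingNumber [Finite V] (H : SimpleGraph V) :
    ∃ M : H.Subgraph, M.IsMatching ∧ M.edgeSet.ncard = matchingNumber H :=
  Nat.sSup_mem (s := {k | ∃ M : H.Subgraph, M.IsMatching ∧ M.edgeSet.ncard = k})
    ⟨0, ⊥, fun _ hv => hv.elim, by simp⟩ (bddAbove_ncard_edgeSet_isMatching H)

lemma matchingNumber_mono [Finite V] {H' : SimpleGraph V} (h : H ≤ H') : matchingNumber H ≤ matchingNumber H' := by
  obtain ⟨M, hM, hcard⟩ := exists_isMatching_ncard_edgeSet_eq_matchingNumber H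
  rw [← hcard]
  simpa [Subgraph.edgeSet_map] using (hM.map_ofLE h).ncard_edgeSet_le_matchingNumber

lemma matchingNumber_le_ncard_edgeSet_add_ncard_compl_verts_div_two [Finite V]
    {M : H.Subgraph} (hM : M.IsMatching) (H' : SimpleGraph V) :
    matchingNumber H' ≤ M.edgeSet.ncard + M.vertsᶜ.ncard / 2 := by
  obtain ⟨M', hM', hcard⟩ := exists_isMatching_ncard_edgeSet_eq_matchingNumber H'
  have hsplit : M.verts.ncard + M.vertsᶜ.ncard = Nat.card V := Set.ncard_add_ncard_compl _
  have hM'_le := hM'.two_mul_ncard_edgeSet_le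
  have hM_verts := hM.ncard_verts
  omega

end SimpleGraph

theorem stmt17_general {V : Type*} [Fintype V] [LinearOrder V] (G : SimpleGraph V)
    (m n : ℕ) (hm : 1 ≤ m)
    (M : (subdivision G n).Subgraph) (hM : M.IsMatching)
    (hmax : M.edgeSet.ncard = matchingNumber (subdivision G n))
    (l : ℕ) (hl : l = {v | v ∉ M.verts}.ncard) :
    matchingNumber (subdivision G n) ≤ matchingNumber (graphPow (subdivision G n) m) ∧
    matchingNumber (graphPow (subdivision G n) m) ≤ matchingNumber (subdivision G n) + l / 2 := by
  refine ⟨matchingNumber_mono (le_graphPow hm), ?_⟩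
  rw [← hmax, hl]
  exact matchingNumber_le_ncard_edgeSet_add_ncard_compl_verts_div_two hM _

theorem stmt17 {V : Type*} [Fintype V] [LinearOrder V] (G : SimpleGraph V)
    (m n : ℕ) (hm : 1 ≤ m) (hn : 1 ≤ n)
    (M : (subdivision G n).Subgraph) (hM : M.IsMatching)
    (hmax : M.edgeSet.ncard = matchingNumber (subdivision G n))
    (l : ℕ) (hl : l = {v | v ∉ M.verts}.ncard) :
    matchingNumber (subdivision G n) ≤ matchingNumber (graphPow (subdivision G n) m) ∧
    matchingNumber (graphPow (subdivision G n) m) ≤ matchingNumber (subdivision G n) + l / 2 :=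
  stmt17_general G m n hm M hM hmax l hl
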